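/- arXiv:1711.07082 — 4 statements merged into one kernel-verified Lean document; each statement's English description precedes it below -/
import Mathlib

section
/- Let f : Z → Y be C¹ near z̄ with f(z̄) ∈ Ω for a closed convex set Ω, and suppose strict complementarity holds at (z̄, z*): there exists μ ∈ ri(N_Ω(f(z̄))) with z* = ∇f(z̄)* μ. Then the set ∇f(z̄)* N_Ω(f(z̄)) + ℝ·z* is closed, i.e., equals its own closure. -/
open Set
open scoped Pointwise

variable {Y : Type*} [NormedAddCommGroup Y] [InnerProductSpace ℝ Y]

/-- The normal cone of convex analysis to `Ω` at `y`. -/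
def normalCone (Ω : Set Y) (y : Y) : Set Y :=
  {w | ∀ y' ∈ Ω, @inner ℝ _ _ w (y' - y) ≤ 0}

/-- if `f : Z → Y` is `C¹` near `z̄` with `f z̄ ∈ Ω`, `Ω` closed
convex, and strict complementarity holds at `(z̄, z*)`, i.e. `z* = ∇f(z̄)* μ`
for some `μ ∈ ri N_Ω(f z̄)`, then the set `∇f(z̄)* N_Ω(f z̄) + ℝ • z*` is
closed. -/
theorem strict_complementarity_closedness
    {Z Y : Type*} [NormedAddCommGroup Z] [InnerProductSpace ℝ Z] [FiniteDimensional ℝ Z]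
    [NormedAddCommGroup Y] [InnerProductSpace ℝ Y] [FiniteDimensional ℝ Y]
    (f : Z → Y) (z0 : Z) (hf : ContDiffAt ℝ 1 f z0)
    (Ω : Set Y) (hΩclosed : IsClosed Ω) (hΩconv : Convex ℝ Ω) (hfz : f z0 ∈ Ω)
    (zs : Z) (μ : Y) (hμ : μ ∈ intrinsicInterior ℝ (normalCone Ω (f z0)))
    (hzs : zs = ContinuousLinearMap.adjoint (fderiv ℝ f z0) μ) :
    IsClosed {z : Z | ∃ y ∈ normalCone Ω (f z0), ∃ t : ℝ,
      z = ContinuousLinearMap.adjoint (fderiv ℝ f z0) y + t • zs} := by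
  set N : Set Y := normalCone Ω (f z0) with hNdef
  set A := ContinuousLinearMap.adjoint (fderiv ℝ f z0) with hAdef
  have hzero : (0 : Y) ∈ N := by
    intro y' hy'; simp
  have hcone : ∀ (c : ℝ), 0 ≤ c → ∀ y ∈ N, c • y ∈ N := by
    intro c hc y hy y' hy'
    rw [real_inner_smul_left]
    exact mul_nonpos_of_nonneg_of_nonpos hc (hy y' hy')
  have hμN : μ ∈ N := intrinsicInterior_subset hμ
  obtain ⟨m, hm, hmμ⟩ := hμ
  rw [mem_interior_iff_mem_nhds] at hm
  obtain ⟨ε, hε, hball⟩ := Metric.mem_nhds_iff.mp hm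
  have key : ∀ x ∈ Submodule.span ℝ N, ∃ y ∈ N, ∃ t : ℝ, x = y + t • μ := by
    intro x hx
    by_cases hx0 : x = 0
    · exact ⟨0, hzero, 0, by simp [hx0]⟩
    have hxn : (0:ℝ) < ‖x‖ := norm_pos_iff.mpr hx0
    set δ : ℝ := ε / (2 * ‖x‖) with hδdef
    have hδ : 0 < δ := div_pos hε (by positivity)
    have hxv : δ • x ∈ vectorSpan ℝ N := by
      refine Submodule.smul_mem _ _ ?_
      refine Submodule.span_le.mpr ?_ hx
      intro y hy
      simpa using vsub_mem_vectorSpan ℝ hy hzero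
    have hμa : μ ∈ affineSpan ℝ N := hmμ ▸ m.2
    have hw : μ + δ • x ∈ affineSpan ℝ N := by
      have := AffineSubspace.vadd_mem_of_mem_direction
        (by rw [direction_affineSpan]; exact hxv) hμa
      simpa [vadd_eq_add, add_comm] using this
    have hdist : dist (⟨μ + δ • x, hw⟩ : affineSpan ℝ N) m < ε := by
      rw [Subtype.dist_eq, hmμ]
      have : ‖δ • x‖ = ε / 2 := by
        rw [norm_smul, Real.norm_eq_abs, abs_of_pos hδ, hδdef]
        field_simp
      simp only [dist_eq_norm]
      rw [show μ + δ • x - μ = δ • x by abel, this]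
      linarith
    have hwN : μ + δ • x ∈ N := hball hdist
    refine ⟨δ⁻¹ • (μ + δ • x), hcone _ (le_of_lt (inv_pos.mpr hδ)) _ hwN, -δ⁻¹, ?_⟩
    rw [smul_add, neg_smul, smul_smul, inv_mul_cancel₀ hδ.ne', one_smul]
    abel
  have hS : {z : Z | ∃ y ∈ N, ∃ t : ℝ, z = A y + t • zs}
      = (Submodule.map A.toLinearMap (Submodule.span ℝ N) : Set Z) := by
    ext z
    constructor
    · rintro ⟨y, hy, t, rfl⟩
      refine ⟨y + t • μ, Submodule.add_mem _ (Submodule.subset_span hy)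
        (Submodule.smul_mem _ _ (Submodule.subset_span hμN)), ?_⟩
      simp [hzs, map_add, map_smul]
    · rintro ⟨x, hx, rfl⟩
      obtain ⟨y, hy, t, rfl⟩ := key x hx
      exact ⟨y, hy, t, by simp [hzs, map_add, map_smul]⟩
  rw [hS]
  exact Submodule.closed_of_finiteDimensional _
end

section
/- Let G : Z → E be C² near z̄ with G(z̄) = 0 and K ⊆ E a closed convex cone, and assume metric subregularity of z ↦ G(z) − K at (z̄, 0) with modulus κ: dist(z, G⁻¹(K)) ≤ κ·dist(G(z), K) for z near z̄. Let v ∈ Z with ∇G(z̄)v ∈ K. Then for every pair (w, q) ∈ Z × E satisfying ∇G(z̄)w + (1/2)∇²G(z̄)(v,v) + q ∈ T_K(∇G(z̄)v), there exists w̃ ∈ Z with ∇G(z̄)w̃ + (1/2)∇²G(z̄)(v,v) ∈ T_K(∇G(z̄)v) and ‖w̃ − w‖ ≤ κ‖q‖. -/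
open Set Filter Topology Metric
open scoped Pointwise

variable {E : Type*} [NormedAddCommGroup E] [InnerProductSpace ℝ E]

/-- The tangent cone of convex analysis to `Ω` at `z`: closure of `ℝ₊ (Ω - z)`. -/
def tangentConeCA (Ω : Set E) (z : E) : Set E :=
  closure {w | ∃ t : ℝ, 0 ≤ t ∧ ∃ z' ∈ Ω, w = t • (z' - z)}

/-!
Write `A = ∇G(z0)`, `y = A v` and `c = ½ ∇²G(z0)(v,v)`. Then
`G (z0 + t v + t² u) = t y + t² (A u + c) + o(t²)` uniformly for bounded `u` (Taylor along the
ray, plus strict differentiability of `G` at `z0` for the `t² u` part). As `A w + c + q ∈ T_K(y)`,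
the point `t y + t² (A w + c + q)` is `o(t²)`-close to `K`, so `z_t = z0 + t v + t² w` has
`dist (G z_t) K ≤ t² ‖q‖ + o(t²)`. Subregularity gives `z' ∈ G⁻¹ K` with
`‖z' - z_t‖ ≤ κ t² ‖q‖ + o(t²)`; writing `z' = z0 + t v + t² u`, the point
`t⁻² (G z' - t y) ∈ ℝ₊ (K - y)` is `o(1)`-close to `A u + c`, while `‖u - w‖ ≤ κ ‖q‖ + o(1)`.
A cluster point of these `u` as `t → 0`, which exists since closed balls of `Z` are compact, is
the required `w̃`.
-/

open Asymptotics

section Taylor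

variable {Z F : Type*} [NormedAddCommGroup Z] [NormedSpace ℝ Z]
  [NormedAddCommGroup F] [NormedSpace ℝ F]

theorem ContDiffAt.isLittleO_sub_taylor_two {G : Z → F} {z0 : Z} (hG : ContDiffAt ℝ 2 G z0) :
    (fun x => G x - G z0 - fderiv ℝ G z0 (x - z0)
        - (1 / 2 : ℝ) • fderiv ℝ (fderiv ℝ G) z0 (x - z0) (x - z0))
      =o[𝓝 z0] fun x => ‖x - z0‖ ^ 2 := by
  set D := fderiv ℝ (fderiv ℝ G) z0
  have hsymm : ∀ a b, D a b = D b a := hG.isSymmSndFDerivAt (by simp)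
  have hD : HasFDerivAt (fderiv ℝ G) D z0 :=
    ((hG.fderiv_right (m := 1) le_rfl).differentiableAt one_ne_zero).hasFDerivAt
  obtain ⟨r, hr, hball⟩ := Metric.mem_nhds_iff.1
    ((hG.eventually (by simp)).mono fun x hx => hx.differentiableAt two_ne_zero)
  have hderiv : ∀ x ∈ ball z0 r, HasFDerivWithinAt
      (fun x => G x - fderiv ℝ G z0 (x - z0) - (1 / 2 : ℝ) • D (x - z0) (x - z0))
      (fderiv ℝ G x - fderiv ℝ G z0 - D (x - z0)) (ball z0 r) x := by
    intro x hx
    have hsub : HasFDerivAt (fun x => x - z0) (ContinuousLinearMap.id ℝ Z) x :=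
      (hasFDerivAt_id x).sub_const z0
    have hsq : HasFDerivAt (fun x => D (x - z0) (x - z0)) ((2 : ℝ) • D (x - z0)) x :=
      ((D.hasFDerivAt.comp x hsub).clm_apply hsub).congr_fderiv <| by
        ext h
        simp [two_smul, hsymm h]
    refine (((hball hx).hasFDerivAt.sub ((fderiv ℝ G z0).hasFDerivAt.comp x hsub)).sub
      (hsq.const_smul (1 / 2 : ℝ))).hasFDerivWithinAt.congr_fderiv ?_
    ext h
    simp [smul_smul]
  have hrem := (convex_ball z0 r).isLittleO_pow_succ (n := 1) (mem_ball_self hr) hderiv ?_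
  · rw [nhdsWithin_eq_nhds.2 (ball_mem_nhds z0 hr)] at hrem
    convert hrem using 2 with x
    simp only [sub_self, map_zero, smul_zero, sub_zero]
    abel
  · rw [nhdsWithin_eq_nhds.2 (ball_mem_nhds z0 hr)]
    simpa only [pow_one] using hD.isLittleO.norm_right

theorem isBigO_smul_of_snd_mem_closedBall {α : Type*} (l : Filter α) (f : α → ℝ) (M : ℝ) :
    (fun p : α × Z => f p.1 • p.2) =O[l ×ˢ 𝓟 (closedBall 0 M)] fun p => f p.1 := by
  refine IsBigO.of_bound M <| eventually_prod_principal_iff.2 <|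
    Eventually.of_forall fun t u hu => ?_
  rw [norm_smul, mul_comm]
  exact mul_le_mul_of_nonneg_right (by simpa using hu) (norm_nonneg _)

theorem ContDiffAt.isLittleO_sub_taylor_two_parabola {G : Z → F} {z0 : Z}
    (hG : ContDiffAt ℝ 2 G z0) (v : Z) (M : ℝ) :
    (fun p : ℝ × Z => G (z0 + p.1 • v + p.1 ^ 2 • p.2) - (G z0 + p.1 • fderiv ℝ G z0 v
        + p.1 ^ 2 • (fderiv ℝ G z0 p.2 + (1 / 2 : ℝ) • fderiv ℝ (fderiv ℝ G) z0 v v)))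
      =o[𝓝 0 ×ˢ 𝓟 (closedBall 0 M)] fun p => p.1 ^ 2 := by
  set A := fderiv ℝ G z0
  set D := fderiv ℝ (fderiv ℝ G) z0
  have hline : Tendsto (fun t : ℝ => z0 + t • v) (𝓝 0) (𝓝 z0) :=
    Continuous.tendsto' (by fun_prop) _ _ (by simp)
  have hray : (fun t : ℝ => G (z0 + t • v) - G z0 - A (t • v)
      - (1 / 2 : ℝ) • D (t • v) (t • v)) =o[𝓝 0] fun t => t ^ 2 := by
    refine ((hG.isLittleO_sub_taylor_two.comp_tendsto hline).trans_isBigO ?_).congr_left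
      fun t => by simp only [Function.comp_apply, add_sub_cancel_left]; rfl
    refine IsBigO.of_bound (‖v‖ ^ 2) (Eventually.of_forall fun t => ?_)
    simp [norm_smul, mul_pow, mul_comm]
  set L : Filter (ℝ × Z) := 𝓝 0 ×ˢ 𝓟 (closedBall 0 M)
  have hfst : Tendsto Prod.fst L (𝓝 0) := tendsto_fst
  have hbound : (fun p : ℝ × Z => p.1 ^ 2 • p.2) =O[L] fun p => p.1 ^ 2 :=
    isBigO_smul_of_snd_mem_closedBall _ (fun t => t ^ 2) M
  have hpair : Tendsto (fun p : ℝ × Z => (z0 + p.1 • v + p.1 ^ 2 • p.2, z0 + p.1 • v)) L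
      (𝓝 (z0, z0)) := by
    have hsmall : Tendsto (fun p : ℝ × Z => p.1 ^ 2 • p.2) L (𝓝 0) :=
      hbound.trans_tendsto <| by simpa using hfst.pow 2
    have hline' := hline.comp hfst
    refine Tendsto.prodMk_nhds ?_ hline'
    simpa using hline'.add hsmall
  have hstrict : (fun p : ℝ × Z => G (z0 + p.1 • v + p.1 ^ 2 • p.2) - G (z0 + p.1 • v)
      - A (p.1 ^ 2 • p.2)) =o[L] fun p => p.1 ^ 2 • p.2 := by
    simpa only [Function.comp_def, add_sub_cancel_left] using
      (hG.hasStrictFDerivAt two_ne_zero).isLittleO.comp_tendsto hpair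
  refine ((hstrict.trans_isBigO hbound).add (hray.comp_tendsto hfst)).congr_left fun p => ?_
  simp only [Function.comp_apply, map_smul, smul_apply]
  module

end Taylor

section ConvexCone

variable {K : Set E}

theorem eventually_infDist_le_of_mem_tangentConeCA (hKconv : Convex ℝ K)
    (hKcone : ∀ t : ℝ, 0 ≤ t → ∀ x ∈ K, t • x ∈ K) {y s : E}
    (hy : y ∈ K) (hs : s ∈ tangentConeCA K y) {ε : ℝ} (hε : 0 < ε) :
    ∀ᶠ t in 𝓝[>] (0 : ℝ), infDist (t • y + t ^ 2 • s) K ≤ ε * t ^ 2 := by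
  obtain ⟨_, ⟨τ, hτ, k, hk, rfl⟩, hsk⟩ := Metric.mem_closure_iff.1 hs ε hε
  have hτsmall : ∀ᶠ t in 𝓝 (0 : ℝ), t * τ ≤ 1 :=
    (Continuous.tendsto' (by fun_prop) 0 0 (by simp)).eventually (eventually_le_nhds one_pos)
  filter_upwards [eventually_mem_nhdsWithin, nhdsWithin_le_nhds hτsmall] with t (ht : 0 < t) htτ
  have hmem : t • y + t ^ 2 • (τ • (k - y)) ∈ K := by
    rw [show t • y + t ^ 2 • (τ • (k - y)) = t • ((1 - t * τ) • y + (t * τ) • k) by module]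
    exact hKcone t ht.le _ (hKconv hy hk (by linarith) (by positivity) (by ring))
  calc infDist (t • y + t ^ 2 • s) K
      ≤ dist (t • y + t ^ 2 • s) (t • y + t ^ 2 • (τ • (k - y))) := infDist_le_dist_of_mem hmem
    _ = t ^ 2 * dist s (τ • (k - y)) := by
        rw [dist_add_left, dist_smul₀, Real.norm_of_nonneg (by positivity)]
    _ ≤ ε * t ^ 2 := by rw [mul_comm]; gcongr

theorem infDist_tangentConeCA_le (hKcone : ∀ t : ℝ, 0 ≤ t → ∀ x ∈ K, t • x ∈ K) {y k : E}
    (hk : k ∈ K) {t : ℝ} (ht : 0 < t) (s : E) :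
    infDist s (tangentConeCA K y) ≤ ‖k - (t • y + t ^ 2 • s)‖ / t ^ 2 := by
  have hmem : (t ^ 2)⁻¹ • (k - t • y) ∈ tangentConeCA K y := by
    refine subset_closure
      ⟨t⁻¹, by positivity, t⁻¹ • k, hKcone _ (by positivity) k hk, ?_⟩
    match_scalars <;> field_simp
  calc infDist s (tangentConeCA K y) ≤ dist s ((t ^ 2)⁻¹ • (k - t • y)) :=
        infDist_le_dist_of_mem hmem
    _ = ‖(-(t ^ 2)⁻¹) • (k - (t • y + t ^ 2 • s))‖ := by
        rw [dist_eq_norm]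
        congr 1
        match_scalars <;> field_simp
    _ = ‖k - (t • y + t ^ 2 • s)‖ / t ^ 2 := by
        rw [norm_smul, norm_neg, norm_inv, Real.norm_of_nonneg (by positivity), inv_mul_eq_div]

end ConvexCone

theorem exists_dist_le_of_forall_exists_dist_le_add {X : Type*} [MetricSpace X]
    [ProperSpace X] {φ : X → ℝ} (hφ : Continuous φ) {w : X} {r : ℝ}
    (h : ∀ ε > 0, ∃ u, dist u w ≤ r + ε ∧ φ u ≤ ε) :
    ∃ u, dist u w ≤ r ∧ φ u ≤ 0 := by
  set ψ : X → ℝ := fun u => max (dist u w - r) (φ u)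
  obtain ⟨u₁, hu₁, -⟩ := h 1 one_pos
  obtain ⟨u, -, hmin⟩ := (isCompact_closedBall w (r + 1)).exists_isMinOn
    ⟨u₁, mem_closedBall.2 hu₁⟩ (by fun_prop : Continuous ψ).continuousOn
  have hψ : ψ u ≤ 0 := by
    refine le_of_forall_pos_le_add fun ε hε => ?_
    obtain ⟨u', hu'w, hu'φ⟩ := h (min ε 1) (by positivity)
    have hu' : u' ∈ closedBall w (r + 1) :=
      mem_closedBall.2 (hu'w.trans (by gcongr; exact min_le_right _ _))
    calc ψ u ≤ ψ u' := hmin hu'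
      _ ≤ min ε 1 := max_le (by linarith) hu'φ
      _ ≤ 0 + ε := by simp
  exact ⟨u, by linarith [le_max_left (dist u w - r) (φ u)], (le_max_right _ _).trans hψ⟩

section SecondOrder

variable {Z : Type*} [NormedAddCommGroup Z] [NormedSpace ℝ Z] {G : Z → E} {z0 : Z}
  {K : Set E} {v w : Z} {q : E}

theorem eventually_infDist_parabola_le (hG : ContDiffAt ℝ 2 G z0) (hG0 : G z0 = 0)
    (hKconv : Convex ℝ K) (hKcone : ∀ t : ℝ, 0 ≤ t → ∀ x ∈ K, t • x ∈ K)
    (hv : fderiv ℝ G z0 v ∈ K)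
    (hwq : fderiv ℝ G z0 w + (1 / 2 : ℝ) • fderiv ℝ (fderiv ℝ G) z0 v v + q ∈
      tangentConeCA K (fderiv ℝ G z0 v)) {η : ℝ} (hη : 0 < η) :
    ∀ᶠ t in 𝓝[>] (0 : ℝ), infDist (G (z0 + t • v + t ^ 2 • w)) K ≤ (‖q‖ + η) * t ^ 2 := by
  set A := fderiv ℝ G z0
  set c := (1 / 2 : ℝ) • fderiv ℝ (fderiv ℝ G) z0 v v
  have htaylor := eventually_prod_principal_iff.1 <|
    isLittleO_iff.1 (hG.isLittleO_sub_taylor_two_parabola v ‖w‖) (half_pos hη)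
  filter_upwards [eventually_infDist_le_of_mem_tangentConeCA hKconv hKcone hv hwq (half_pos hη),
    nhdsWithin_le_nhds htaylor] with t hcone htaylor
  replace htaylor := htaylor w (by simp)
  simp only [hG0, zero_add, norm_pow, Real.norm_eq_abs, sq_abs] at htaylor
  have hdist : dist (G (z0 + t • v + t ^ 2 • w)) (t • A v + t ^ 2 • (A w + c + q))
      ≤ η / 2 * t ^ 2 + t ^ 2 * ‖q‖ := by
    rw [dist_eq_norm, smul_add, ← add_assoc, sub_add_eq_sub_sub,
      ← norm_smul_of_nonneg (sq_nonneg t)]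
    exact (norm_sub_le _ _).trans (add_le_add_left htaylor _)
  calc infDist (G (z0 + t • v + t ^ 2 • w)) K
      ≤ infDist (t • A v + t ^ 2 • (A w + c + q)) K
        + dist (G (z0 + t • v + t ^ 2 • w)) (t • A v + t ^ 2 • (A w + c + q)) :=
        infDist_le_infDist_add_dist
    _ ≤ η / 2 * t ^ 2 + (η / 2 * t ^ 2 + t ^ 2 * ‖q‖) := add_le_add hcone hdist
    _ = (‖q‖ + η) * t ^ 2 := by ring

theorem exists_approx_second_order_solution (hG : ContDiffAt ℝ 2 G z0) (hG0 : G z0 = 0)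
    (hKconv : Convex ℝ K) (hKcone : ∀ t : ℝ, 0 ≤ t → ∀ x ∈ K, t • x ∈ K) {κ : ℝ} (hκ : 0 ≤ κ)
    (hsub : ∀ᶠ z in 𝓝 z0, infDist z (G ⁻¹' K) ≤ κ * infDist (G z) K)
    (hv : fderiv ℝ G z0 v ∈ K)
    (hwq : fderiv ℝ G z0 w + (1 / 2 : ℝ) • fderiv ℝ (fderiv ℝ G) z0 v v + q ∈
      tangentConeCA K (fderiv ℝ G z0 v)) {ε : ℝ} (hε : 0 < ε) :
    ∃ u, dist u w ≤ κ * ‖q‖ + ε ∧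
      infDist (fderiv ℝ G z0 u + (1 / 2 : ℝ) • fderiv ℝ (fderiv ℝ G) z0 v v)
        (tangentConeCA K (fderiv ℝ G z0 v)) ≤ ε := by
  set A := fderiv ℝ G z0
  set c := (1 / 2 : ℝ) • fderiv ℝ (fderiv ℝ G) z0 v v
  set η := ε / (2 * κ + 1)
  have hη : 0 < η := by positivity
  have hηε : κ * (2 * η) + η = ε := by simp only [η]; field_simp
  set M := ‖w‖ + κ * ‖q‖ + ε
  have htaylor := eventually_prod_principal_iff.1 <|
    isLittleO_iff.1 (hG.isLittleO_sub_taylor_two_parabola v M) hη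
  have hcurve : Tendsto (fun t : ℝ => z0 + t • v + t ^ 2 • w) (𝓝 0) (𝓝 z0) :=
    Continuous.tendsto' (by fun_prop) _ _ (by simp)
  obtain ⟨t, (ht : 0 < t), hGzt, hexp, hsubt⟩ := (eventually_mem_nhdsWithin.and <|
    (eventually_infDist_parabola_le hG hG0 hKconv hKcone hv hwq (by positivity : 0 < 2 * η)).and <|
      nhdsWithin_le_nhds (htaylor.and (hcurve.eventually hsub))).exists
  simp only [hG0, zero_add, norm_pow, Real.norm_eq_abs, sq_abs] at hexp
  set zt := z0 + t • v + t ^ 2 • w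
  have hpre : (G ⁻¹' K).Nonempty := ⟨z0, by simpa [hG0] using hKcone 0 le_rfl _ hv⟩
  obtain ⟨z', hz'K, hz'⟩ := (infDist_lt_iff hpre).1 <| hsubt.trans_lt <|
    calc κ * infDist (G zt) K ≤ κ * ((‖q‖ + 2 * η) * t ^ 2) := by gcongr
      _ < (κ * ‖q‖ + ε) * t ^ 2 := by rw [← hηε]; nlinarith [pow_pos ht 2]
  set u := w + (t ^ 2)⁻¹ • (z' - zt)
  have hz'u : z' = z0 + t • v + t ^ 2 • u := by
    simp only [u, smul_add, smul_inv_smul₀ (pow_ne_zero 2 ht.ne'), zt]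
    abel
  have huw : dist u w < κ * ‖q‖ + ε := by
    rw [dist_eq_norm, add_sub_cancel_left, norm_smul, norm_inv, norm_pow,
      Real.norm_of_nonneg ht.le, inv_mul_lt_iff₀ (by positivity), mul_comm, ← dist_eq_norm,
      dist_comm]
    exact hz'
  refine ⟨u, huw.le, ?_⟩
  have hu : u ∈ closedBall 0 M := by
    rw [mem_closedBall_zero_iff]
    linarith [norm_le_norm_add_norm_sub' u w, dist_eq_norm u w]
  calc infDist (A u + c) (tangentConeCA K (A v))
      ≤ ‖G z' - (t • A v + t ^ 2 • (A u + c))‖ / t ^ 2 :=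
        infDist_tangentConeCA_le hKcone hz'K ht _
    _ ≤ η * t ^ 2 / t ^ 2 := by gcongr; rw [hz'u]; exact hexp u hu
    _ ≤ ε := by
        rw [mul_div_cancel_right₀ _ (by positivity), ← hηε]
        linarith [mul_nonneg hκ (mul_nonneg zero_le_two hη.le)]

end SecondOrder

theorem upper_lipschitz_second_order_general
    {Z E : Type*} [NormedAddCommGroup Z] [InnerProductSpace ℝ Z] [FiniteDimensional ℝ Z]
    [NormedAddCommGroup E] [InnerProductSpace ℝ E]
    (G : Z → E) (z0 : Z) (hG : ContDiffAt ℝ 2 G z0) (hG0 : G z0 = 0)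
    (K : Set E) (hKconv : Convex ℝ K)
    (hKcone : ∀ t : ℝ, 0 ≤ t → ∀ x ∈ K, t • x ∈ K)
    (κ : ℝ) (hκ : 0 ≤ κ)
    (hsub : ∀ᶠ z in 𝓝 z0, Metric.infDist z (G ⁻¹' K) ≤ κ * Metric.infDist (G z) K)
    (v : Z) (hv : fderiv ℝ G z0 v ∈ K) :
    ∀ (w : Z) (q : E),
      fderiv ℝ G z0 w + (1 / 2 : ℝ) • iteratedFDeriv ℝ 2 G z0 ![v, v] + q ∈
          tangentConeCA K (fderiv ℝ G z0 v) →
      ∃ w' : Z,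
        fderiv ℝ G z0 w' + (1 / 2 : ℝ) • iteratedFDeriv ℝ 2 G z0 ![v, v] ∈
            tangentConeCA K (fderiv ℝ G z0 v) ∧
        ‖w' - w‖ ≤ κ * ‖q‖ := by
  intro w q hwq
  simp only [iteratedFDeriv_two_apply, Matrix.cons_val_zero, Matrix.cons_val_one] at hwq ⊢
  obtain ⟨w', hw'w, hw'⟩ := exists_dist_le_of_forall_exists_dist_le_add
    ((continuous_infDist_pt _).comp (by fun_prop))
    fun ε hε => exists_approx_second_order_solution hG hG0 hKconv hKcone hκ hsub hv hwq hε
  refine ⟨w', ?_, by rwa [dist_eq_norm] at hw'w⟩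
  exact (isClosed_closure.mem_iff_infDist_zero ⟨_, hwq⟩).2 (le_antisymm hw' infDist_nonneg)

/-- upper Lipschitzian property of the second-order auxiliary
mapping, pointwise version: under `C²`-smoothness of `G` with `G z̄ = 0`,
metric subregularity of `z ↦ G z - K` at `(z̄, 0)` with modulus `κ`, and
`∇G(z̄) v ∈ K`, every pair `(w, q)` with
`∇G(z̄) w + ½ ∇²G(z̄)(v,v) + q ∈ T_K(∇G(z̄) v)` admits `w̃` with
`∇G(z̄) w̃ + ½ ∇²G(z̄)(v,v) ∈ T_K(∇G(z̄) v)` and `‖w̃ - w‖ ≤ κ ‖q‖`. -/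
theorem upper_lipschitz_second_order
    {Z E : Type*} [NormedAddCommGroup Z] [InnerProductSpace ℝ Z] [FiniteDimensional ℝ Z]
    [NormedAddCommGroup E] [InnerProductSpace ℝ E] [FiniteDimensional ℝ E]
    (G : Z → E) (z0 : Z) (hG : ContDiffAt ℝ 2 G z0) (hG0 : G z0 = 0)
    (K : Set E) (hKclosed : IsClosed K) (hKconv : Convex ℝ K)
    (hKcone : ∀ t : ℝ, 0 ≤ t → ∀ x ∈ K, t • x ∈ K) (hK0 : (0 : E) ∈ K)
    (κ : ℝ) (hκ : 0 ≤ κ)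
    (hsub : ∀ᶠ z in 𝓝 z0, Metric.infDist z (G ⁻¹' K) ≤ κ * Metric.infDist (G z) K)
    (v : Z) (hv : fderiv ℝ G z0 v ∈ K) :
    ∀ (w : Z) (q : E),
      fderiv ℝ G z0 w + (1 / 2 : ℝ) • iteratedFDeriv ℝ 2 G z0 ![v, v] + q ∈
          tangentConeCA K (fderiv ℝ G z0 v) →
      ∃ w' : Z,
        fderiv ℝ G z0 w' + (1 / 2 : ℝ) • iteratedFDeriv ℝ 2 G z0 ![v, v] ∈
            tangentConeCA K (fderiv ℝ G z0 v) ∧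
        ‖w' - w‖ ≤ κ * ‖q‖ :=
  upper_lipschitz_second_order_general G z0 hG hG0 K hKconv hKcone κ hκ hsub v hv
end

section
/- Let h : V → E be C² on a neighborhood V of ȳ ∈ Y with h(ȳ) = 0 and ∇h(ȳ) surjective, let K ⊆ E be a closed convex cone, and set C ∩ V = {y ∈ V : h(y) ∈ K}. Then the normal cone of C at ȳ (regular/Fréchet normal cone) equals ∇h(ȳ)* N_K(0) = ∇h(ȳ)* K*, and C is normally regular at ȳ (the regular and limiting normal cones coincide). -/
open Set Filter Topology Metric
open scoped Pointwise

variable {Y : Type*} [NormedAddCommGroup Y] [InnerProductSpace ℝ Y]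

/-- The polar cone `K* = {μ : ⟪μ, k⟫ ≤ 0 for all k ∈ K}`. -/
def polarCone (K : Set Y) : Set Y := {μ | ∀ k ∈ K, @inner ℝ _ _ μ k ≤ 0}

/-- The regular (Fréchet) normal cone:
`N̂_C(ȳ) = {v : limsup_{y →_C ȳ} ⟪v, y - ȳ⟫ / ‖y - ȳ‖ ≤ 0}`. -/
def regNormalCone (C : Set Y) (y0 : Y) : Set Y :=
  {v | ∀ ε > (0 : ℝ), ∀ᶠ y in 𝓝[C] y0, @inner ℝ _ _ v (y - y0) ≤ ε * ‖y - y0‖}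

/-- The limiting (Mordukhovich) normal cone. -/
def limNormalCone (C : Set Y) (y0 : Y) : Set Y :=
  {v | ∃ z : ℕ → Y, ∃ w : ℕ → Y, (∀ n, z n ∈ C) ∧ Tendsto z atTop (𝓝 y0) ∧
      (∀ n, w n ∈ regNormalCone C (z n)) ∧ Tendsto w atTop (𝓝 v)}

/-! At a point `z` of `C ∩ V` where `∇h(z)` is onto, the implicit function theorem applied to
`y ↦ (h y, projection of y onto ker ∇h(z))` produces, for every `d` with `h z + ∇h(z) d ∈ K`, a
curve in `h⁻¹(K)` leaving `z` with velocity `d`; so every regular normal `v` at `z` satisfies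
`⟪v, d⟫ ≤ 0` for these `d`. Taking `±d ∈ ker ∇h(z)` gives `v ∈ (ker ∇h(z))ᗮ = range ∇h(z)*`,
and then `v = ∇h(z)* μ` with `μ` normal to `K` at `h z`. Conversely `∇h(ȳ)* μ` with `μ ∈ K*` is
a regular normal at `ȳ` by the first-order expansion of `h`.

For a limiting normal `v = lim ∇h(zₙ)* μₙ`, continuity of `∇h` makes the adjoints `∇h(zₙ)*`
uniformly antilipschitz near `ȳ`, so `μₙ` stays bounded; a limit point `μ` of `μₙ` gives
`v = ∇h(ȳ)* μ`, and `μ ∈ K*` because `h zₙ → h ȳ = 0`. -/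

open scoped NNReal RealInnerProductSpace InnerProduct

theorem mem_posTangentConeAt_of_hasDerivAt {F : Type*} [NormedAddCommGroup F] [NormedSpace ℝ F]
    {γ : ℝ → F} {d : F} {s : Set F} (hγ : HasDerivAt γ d 0) (hs : ∀ᶠ t in 𝓝[>] 0, γ t ∈ s) :
    d ∈ posTangentConeAt s (γ 0) := by
  refine mem_tangentConeAt_of_seq (𝓝[>] (0 : ℝ)) (fun t ↦ t⁻¹.toNNReal) (fun t ↦ γ t - γ 0)
    ?_ (by simpa using hs) ?_
  · simpa using (hγ.continuousAt.tendsto.sub_const (γ 0)).mono_left nhdsWithin_le_nhds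
  · refine hγ.tendsto_slope_zero_right.congr' ?_
    filter_upwards [self_mem_nhdsWithin] with t ht
    simp [NNReal.smul_def, Real.coe_toNNReal _ (inv_nonneg.2 (le_of_lt ht))]

section ImplicitCurve

variable {F : Type*} [NormedAddCommGroup F] [NormedSpace ℝ F] [CompleteSpace F]

theorem HasStrictFDerivAt.exists_curve_map_eq_add_smul {G : Type*} [NormedAddCommGroup G]
    [NormedSpace ℝ G] {Φ : F → G} {L : F ≃L[ℝ] G} {z : F}
    (hΦ : HasStrictFDerivAt Φ (L : F →L[ℝ] G) z) (d : F) :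
    ∃ γ : ℝ → F, γ 0 = z ∧ HasDerivAt γ d 0 ∧ ∀ᶠ t in 𝓝 0, Φ (γ t) = Φ z + t • L d := by
  have hline : HasDerivAt (fun t : ℝ ↦ Φ z + t • L d) (L d) 0 := by
    simpa using ((hasDerivAt_id (0 : ℝ)).smul_const (L d)).const_add (Φ z)
  have hline0 : Φ z + (0 : ℝ) • L d = Φ z := by simp
  refine ⟨fun t ↦ hΦ.localInverse Φ L z (Φ z + t • L d), by simp, ?_, ?_⟩
  · have hinv := hΦ.to_localInverse.hasFDerivAt
    rw [← hline0] at hinv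
    simpa [Function.comp_def] using hinv.comp_hasDerivAt (0 : ℝ) hline
  · exact hline.continuousAt.tendsto.eventually (hline0 ▸ hΦ.eventually_right_inverse)

variable {E : Type*} [NormedAddCommGroup E] [NormedSpace ℝ E] [FiniteDimensional ℝ E]

theorem HasStrictFDerivAt.exists_curve_map_eq_add_smul_of_surjective {h : F → E}
    {A : F →L[ℝ] E} {z : F} (hh : HasStrictFDerivAt h A z) (hA : Function.Surjective A)
    (d : F) : ∃ γ : ℝ → F, γ 0 = z ∧ HasDerivAt γ d 0 ∧ ∀ᶠ t in 𝓝 0, h (γ t) = h z + t • A d := by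
  have := FiniteDimensional.complete ℝ E
  let φ := hh.implicitFunctionDataOfComplemented h A (LinearMap.range_eq_top.2 hA)
    A.ker_closedComplemented_of_finiteDimensional_range
  obtain ⟨γ, hγ0, hγ, hγφ⟩ := φ.hasStrictFDerivAt.exists_curve_map_eq_add_smul d
  exact ⟨γ, hγ0, hγ, hγφ.mono fun t ht ↦ congrArg Prod.fst ht⟩

theorem Convex.mem_posTangentConeAt_preimage {K : Set E} (hK : Convex ℝ K) {h : F → E}
    {A : F →L[ℝ] E} {z : F} (hh : HasStrictFDerivAt h A z) (hA : Function.Surjective A)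
    (hz : h z ∈ K) {d : F} (hd : h z + A d ∈ K) : d ∈ posTangentConeAt (h ⁻¹' K) z := by
  obtain ⟨γ, rfl, hγ, hhγ⟩ := hh.exists_curve_map_eq_add_smul_of_surjective hA d
  refine mem_posTangentConeAt_of_hasDerivAt hγ ?_
  filter_upwards [nhdsWithin_le_nhds hhγ, Ioo_mem_nhdsGT one_pos] with t ht ht1
  rw [mem_preimage, ht]
  simpa using hK.add_smul_sub_mem hz hd (Ioo_subset_Icc_self ht1)

end ImplicitCurve

theorem inner_nonpos_of_mem_regNormalCone_of_mem_posTangentConeAt {C : Set Y} {z v d : Y}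
    (hv : v ∈ regNormalCone C z) (hd : d ∈ posTangentConeAt C z) : ⟪v, d⟫ ≤ 0 := by
  obtain ⟨α, l, hl, c, δ, hδ, hδC, hcδ⟩ := exists_fun_of_mem_tangentConeAt hd
  have hzδ : Tendsto (fun n ↦ z + δ n) l (𝓝[C] z) :=
    tendsto_nhdsWithin_iff.2 ⟨by simpa using tendsto_const_nhds.add hδ, hδC⟩
  have hε : ∀ ε > 0, ⟪v, d⟫ ≤ ε * ‖d‖ := fun ε hε ↦ by
    refine le_of_tendsto_of_tendsto (tendsto_const_nhds.inner hcδ)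
      (tendsto_const_nhds.mul hcδ.norm) ((hzδ.eventually (hv ε hε)).mono fun n hn ↦ ?_)
    simp only [add_sub_cancel_left] at hn
    simpa [NNReal.smul_def, inner_smul_right, norm_smul, mul_left_comm _ (c n : ℝ)]
      using mul_le_mul_of_nonneg_left hn (c n).2
  have hlim : Tendsto (fun ε : ℝ ↦ ε * ‖d‖) (𝓝 0) (𝓝 0) := by
    simpa using (tendsto_id (x := 𝓝 (0 : ℝ))).mul_const ‖d‖
  exact ge_of_tendsto (hlim.mono_left nhdsWithin_le_nhds)
    (eventually_nhdsWithin_of_forall (s := Ioi 0) hε)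

section NormalCones

variable {E : Type*} [NormedAddCommGroup E] [InnerProductSpace ℝ E]

/-- The normal cone `N_K(e)` of convex analysis. -/
def convexNormalCone (K : Set E) (e : E) : Set E := {μ | ∀ k ∈ K, ⟪μ, k - e⟫ ≤ 0}

theorem convexNormalCone_zero (K : Set E) : convexNormalCone K 0 = polarCone K := by
  simp [convexNormalCone, polarCone]

variable [CompleteSpace Y] [FiniteDimensional ℝ E]

theorem HasFDerivAt.adjoint_mem_regNormalCone {h : Y → E} {A : Y →L[ℝ] E} {y0 : Y}
    (hh : HasFDerivAt h A y0) {C V : Set Y} {K : Set E} (hV : V ∈ 𝓝 y0)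
    (hCK : C ∩ V ⊆ h ⁻¹' K) {μ : E} (hμ : μ ∈ convexNormalCone K (h y0)) :
    (A†) μ ∈ regNormalCone C y0 := by
  intro ε hε
  have hrem := (((innerSL ℝ μ).isBigO_comp _ _).trans_isLittleO hh.isLittleO).def hε
  filter_upwards [nhdsWithin_le_nhds hrem, nhdsWithin_le_nhds hV, self_mem_nhdsWithin]
    with y hy hyV hyC
  have hyK : ⟪μ, h y - h y0⟫ ≤ 0 := hμ _ (hCK ⟨hyC, hyV⟩)
  have hy' := (neg_le_abs _).trans (Real.norm_eq_abs _ ▸ hy)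
  simp only [innerSL_apply_apply] at hy'
  calc ⟪(A†) μ, y - y0⟫ = ⟪μ, h y - h y0⟫ - ⟪μ, h y - h y0 - A (y - y0)⟫ := by
        rw [ContinuousLinearMap.adjoint_inner_left]
        simp only [inner_sub_right]
        ring
    _ ≤ ε * ‖y - y0‖ := by linarith

theorem HasStrictFDerivAt.regNormalCone_subset_image_adjoint {h : Y → E} {A : Y →L[ℝ] E}
    {z : Y} (hh : HasStrictFDerivAt h A z) (hA : Function.Surjective A) {C V : Set Y}
    {K : Set E} (hK : Convex ℝ K) (hz : h z ∈ K) (hV : V ∈ 𝓝 z) (hKC : h ⁻¹' K ∩ V ⊆ C) :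
    regNormalCone C z ⊆ A† '' convexNormalCone K (h z) := by
  intro v hv
  have htan : ∀ d, h z + A d ∈ K → ⟪v, d⟫ ≤ 0 := fun d hd ↦ by
    refine inner_nonpos_of_mem_regNormalCone_of_mem_posTangentConeAt hv
      (tangentConeAt_mono hKC ?_)
    rw [tangentConeAt_inter_nhds hV]
    exact hK.mem_posTangentConeAt_preimage hh hA hz hd
  have hvker : v ∈ A.kerᗮ := by
    refine (Submodule.mem_orthogonal' _ _).2 fun d hd ↦ le_antisymm ?_ ?_
    · exact htan d (by simpa [show A d = 0 from hd] using hz)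
    · simpa using htan (-d) (by simpa [show A d = 0 from hd] using hz)
  rw [A.orthogonal_ker, (Submodule.closed_of_finiteDimensional _).submodule_topologicalClosure_eq]
    at hvker
  obtain ⟨μ, rfl⟩ := hvker
  refine ⟨μ, fun k hk ↦ ?_, rfl⟩
  obtain ⟨d, hd⟩ := hA (k - h z)
  simpa [← hd, ContinuousLinearMap.adjoint_inner_left] using htan d (by simpa [hd] using hk)

theorem ContinuousLinearMap.injective_adjoint_iff_surjective (A : Y →L[ℝ] E) :
    Function.Injective (A†) ↔ Function.Surjective A := by
  have : (A†).ker = ⊥ ↔ A.range = ⊤ := by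
    rw [← A.orthogonal_range, Submodule.orthogonal_eq_bot_iff]
  exact LinearMap.ker_eq_bot.symm.trans (this.trans LinearMap.range_eq_top)

end NormalCones

theorem ContinuousAt.eventually_antilipschitzWith {X F G : Type*} [TopologicalSpace X]
    [NormedAddCommGroup F] [NormedSpace ℝ F] [FiniteDimensional ℝ F]
    [NormedAddCommGroup G] [NormedSpace ℝ G] {T : X → F →L[ℝ] G} {x0 : X}
    (hT : ContinuousAt T x0) (hinj : Function.Injective (T x0)) :
    ∃ c : ℝ≥0, ∀ᶠ x in 𝓝 x0, AntilipschitzWith c (T x) := by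
  obtain ⟨K, hK0, hK⟩ :=
    (T x0 : F →ₗ[ℝ] G).exists_antilipschitzWith (LinearMap.ker_eq_bot.2 hinj)
  have hK0' : (0 : ℝ) < K := hK0
  refine ⟨2 * K, ?_⟩
  have hr : (0 : ℝ) < (2 * (K : ℝ))⁻¹ := by positivity
  filter_upwards [hT.eventually (ball_mem_nhds (T x0) hr)] with x hx
  refine (T x).antilipschitz_of_bound fun μ ↦ ?_
  have hclose : ‖T x0 - T x‖ * K ≤ 1 / 2 := by
    rw [dist_comm, dist_eq_norm] at hx
    calc ‖T x0 - T x‖ * K ≤ (2 * (K : ℝ))⁻¹ * K := by gcongr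
      _ = 1 / 2 := by field_simp
  have h0 : ‖μ‖ ≤ K * ‖T x0 μ‖ := ZeroHomClass.bound_of_antilipschitz (T x0) hK μ
  have h1 : ‖T x0 μ‖ ≤ ‖T x μ‖ + ‖T x0 - T x‖ * ‖μ‖ := by
    calc ‖T x0 μ‖ = ‖T x μ + (T x0 - T x) μ‖ := by simp
      _ ≤ ‖T x μ‖ + ‖T x0 - T x‖ * ‖μ‖ :=
        (norm_add_le _ _).trans (by gcongr; exact (T x0 - T x).le_opNorm μ)
  push_cast
  nlinarith [norm_nonneg μ]

theorem regNormalCone_subset_limNormalCone {C : Set Y} {y0 : Y} (hy0 : y0 ∈ C) :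
    regNormalCone C y0 ⊆ limNormalCone C y0 := fun v hv ↦
  ⟨fun _ ↦ y0, fun _ ↦ v, fun _ ↦ hy0, tendsto_const_nhds, fun _ ↦ hv, tendsto_const_nhds⟩

section Limits

variable {E : Type*} [NormedAddCommGroup E] [InnerProductSpace ℝ E] [FiniteDimensional ℝ E]
  [CompleteSpace Y]

theorem mem_image_adjoint_of_tendsto {B : ℕ → Y →L[ℝ] E} {A : Y →L[ℝ] E}
    (hB : Tendsto B atTop (𝓝 A)) {c : ℝ≥0} (hBc : ∀ n, AntilipschitzWith c ((B n)†))
    {K : Set E} {e : ℕ → E} {e0 : E} (he : Tendsto e atTop (𝓝 e0))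
    {μ : ℕ → E} (hμ : ∀ n, μ n ∈ convexNormalCone K (e n)) {v : Y}
    (hv : Tendsto (fun n ↦ ((B n)†) (μ n)) atTop (𝓝 v)) :
    v ∈ A† '' convexNormalCone K e0 := by
  obtain ⟨R, hR⟩ := isBounded_iff_forall_norm_le.1 (isBounded_range_of_tendsto _ hv)
  have hμR : ∀ n, μ n ∈ closedBall (0 : E) (c * R) := fun n ↦ by
    rw [mem_closedBall, dist_zero_right]
    exact (ZeroHomClass.bound_of_antilipschitz _ (hBc n) (μ n)).trans
      (by gcongr; exact hR _ (mem_range_self n))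
  obtain ⟨μ0, -, φ, hφ, hμφ⟩ := tendsto_subseq_of_bounded isBounded_closedBall hμR
  have hlim : Tendsto (fun n ↦ ((B (φ n))†) (μ (φ n))) atTop (𝓝 ((A†) μ0)) :=
    (isBoundedBilinearMap_apply.continuous.tendsto _).comp
      (((ContinuousLinearMap.adjoint.continuous.tendsto A).comp
        (hB.comp hφ.tendsto_atTop)).prodMk_nhds hμφ)
  refine ⟨μ0, fun k hk ↦ ?_, tendsto_nhds_unique hlim (hv.comp hφ.tendsto_atTop)⟩
  exact le_of_tendsto' (hμφ.inner (tendsto_const_nhds.sub (he.comp hφ.tendsto_atTop)))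
    fun n ↦ hμ (φ n) k hk

theorem limNormalCone_subset_image_adjoint {C V : Set Y} {h : Y → E} {K : Set E} {y0 : Y}
    (hV : IsOpen V) (hy0V : y0 ∈ V) (hh : ContDiffOn ℝ 1 h V)
    (hsurj : Function.Surjective (fderiv ℝ h y0)) (hK : Convex ℝ K)
    (hred : C ∩ V = {y ∈ V | h y ∈ K}) :
    limNormalCone C y0 ⊆ (fderiv ℝ h y0)† '' convexNormalCone K (h y0) := by
  rintro v ⟨z, w, hzC, hz, hw, hwv⟩
  have hderiv : ContinuousAt (fderiv ℝ h) y0 :=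
    (hh.continuousOn_fderiv_of_isOpen hV le_rfl).continuousAt (hV.mem_nhds hy0V)
  have hadj : ContinuousAt (fun y ↦ (fderiv ℝ h y)†) y0 :=
    ContinuousLinearMap.adjoint.continuous.continuousAt.comp hderiv
  obtain ⟨c, hc⟩ := hadj.eventually_antilipschitzWith
    ((fderiv ℝ h y0).injective_adjoint_iff_surjective.2 hsurj)
  obtain ⟨N, hN⟩ := eventually_atTop.1 (hz.eventually (hc.and (hV.mem_nhds hy0V)))
  have hrep (n : ℕ) : ∃ μ ∈ convexNormalCone K (h (z (n + N))),
      ((fderiv ℝ h (z (n + N)))†) μ = w (n + N) := by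
    obtain ⟨hcn, hzV⟩ := hN (n + N) le_add_self
    have hstrict := (hh.contDiffAt (hV.mem_nhds hzV)).hasStrictFDerivAt one_ne_zero
    exact hstrict.regNormalCone_subset_image_adjoint
      ((fderiv ℝ h _).injective_adjoint_iff_surjective.1 hcn.injective) hK
      (hred.le ⟨hzC _, hzV⟩).2 (hV.mem_nhds hzV) (fun y hy ↦ (hred.ge ⟨hy.2, hy.1⟩).1) (hw _)
  choose μ hμK hμ using hrep
  have hzN := hz.comp (tendsto_add_atTop_nat N)
  refine mem_image_adjoint_of_tendsto (hderiv.tendsto.comp hzN)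
    (fun n ↦ (hN (n + N) le_add_self).1)
    ((hh.continuousOn.continuousAt (hV.mem_nhds hy0V)).tendsto.comp hzN) hμK ?_
  simpa [hμ, Function.comp_def] using hwv.comp (tendsto_add_atTop_nat N)

end Limits

theorem normal_cone_of_reducible_set_general
    {Y E : Type*} [NormedAddCommGroup Y] [InnerProductSpace ℝ Y] [FiniteDimensional ℝ Y]
    [NormedAddCommGroup E] [InnerProductSpace ℝ E] [FiniteDimensional ℝ E]
    (C : Set Y) (y0 : Y) (hy0 : y0 ∈ C)
    (V : Set Y) (hVopen : IsOpen V) (hy0V : y0 ∈ V)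
    (h : Y → E) (hh : ContDiffOn ℝ 2 h V) (hh0 : h y0 = 0)
    (hsurj : Function.Surjective (fderiv ℝ h y0))
    (K : Set E) (hKconv : Convex ℝ K)
    (hred : C ∩ V = {y ∈ V | h y ∈ K}) :
    regNormalCone C y0 = ContinuousLinearMap.adjoint (fderiv ℝ h y0) '' polarCone K ∧
    regNormalCone C y0 = limNormalCone C y0 := by
  have hC1 : ContDiffOn ℝ 1 h V := hh.of_le one_le_two
  have hV : V ∈ 𝓝 y0 := hVopen.mem_nhds hy0V
  have hstrict := (hC1.contDiffAt hV).hasStrictFDerivAt one_ne_zero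
  have hreg : regNormalCone C y0 = (fderiv ℝ h y0)† '' convexNormalCone K (h y0) := by
    refine (hstrict.regNormalCone_subset_image_adjoint hsurj hKconv (hred.le ⟨hy0, hy0V⟩).2 hV
      fun y hy ↦ (hred.ge ⟨hy.2, hy.1⟩).1).antisymm ?_
    rintro _ ⟨μ, hμ, rfl⟩
    exact hstrict.hasFDerivAt.adjoint_mem_regNormalCone hV (fun y hy ↦ (hred.le hy).2) hμ
  rw [← convexNormalCone_zero, ← hh0]
  refine ⟨hreg, (regNormalCone_subset_limNormalCone hy0).antisymm ?_⟩
  rw [hreg]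
  exact limNormalCone_subset_image_adjoint hVopen hy0V hC1 hsurj hKconv hred

/-- if `C` is `C²`-cone reducible at `ȳ` via `h` and the closed
convex cone `K` (with `h ȳ = 0` and `∇h(ȳ)` surjective), then the regular
normal cone of `C` at `ȳ` equals `∇h(ȳ)* K* = ∇h(ȳ)* N_K(0)`, and `C` is
normally regular at `ȳ`: the regular and limiting normal cones coincide. -/
theorem normal_cone_of_reducible_set
    {Y E : Type*} [NormedAddCommGroup Y] [InnerProductSpace ℝ Y] [FiniteDimensional ℝ Y]
    [NormedAddCommGroup E] [InnerProductSpace ℝ E] [FiniteDimensional ℝ E]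
    (C : Set Y) (hC : IsClosed C) (y0 : Y) (hy0 : y0 ∈ C)
    (V : Set Y) (hVopen : IsOpen V) (hy0V : y0 ∈ V)
    (h : Y → E) (hh : ContDiffOn ℝ 2 h V) (hh0 : h y0 = 0)
    (hsurj : Function.Surjective (fderiv ℝ h y0))
    (K : Set E) (hKclosed : IsClosed K) (hKconv : Convex ℝ K)
    (hKcone : ∀ t : ℝ, 0 ≤ t → ∀ x ∈ K, t • x ∈ K) (hK0 : (0 : E) ∈ K)
    (hred : C ∩ V = {y ∈ V | h y ∈ K}) :
    regNormalCone C y0 = ContinuousLinearMap.adjoint (fderiv ℝ h y0) '' polarCone K ∧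
    regNormalCone C y0 = limNormalCone C y0 :=
  normal_cone_of_reducible_set_general C y0 hy0 V hVopen hy0V h hh hh0 hsurj K hKconv hred
end

section
/- Let S : P ⇉ X be a set-valued mapping with closed graph between finite-dimensional spaces and (p̄, x̄) ∈ gph S. If the graphical derivative satisfies DS(p̄, x̄)(0) = {0}, then S is isolatedly calm at (p̄, x̄): there exist ℓ > 0 and neighborhoods Q of p̄ and U of x̄ such that S(p) ∩ U ⊆ {x̄} + ℓ‖p − p̄‖·B_X for all p ∈ Q. -/
open Set Filter Topology Metric
open scoped Pointwise

/-- The contingent (Bouligand–Severi tangent) cone, via sequences. -/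
def contingentCone {Z : Type*} [NormedAddCommGroup Z] [NormedSpace ℝ Z]
    (Ω : Set Z) (z : Z) : Set Z :=
  {w | ∃ t : ℕ → ℝ, ∃ wk : ℕ → Z, (∀ n, 0 < t n) ∧ Tendsto t atTop (𝓝 0) ∧
      Tendsto wk atTop (𝓝 w) ∧ ∀ n, z + t n • wk n ∈ Ω}

/-- graphical derivative criterion for isolated calmness:
if `S` has closed graph, `(p̄, x̄) ∈ gph S`, and `DS(p̄, x̄)(0) = {0}`, then `S`
is isolatedly calm at `(p̄, x̄)`. -/
theorem isolated_calmness_criterion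
    {P X : Type*} [NormedAddCommGroup P] [NormedSpace ℝ P] [FiniteDimensional ℝ P]
    [NormedAddCommGroup X] [NormedSpace ℝ X] [FiniteDimensional ℝ X]
    (S : P → Set X) (hgraph : IsClosed {px : P × X | px.2 ∈ S px.1})
    (p0 : P) (x0 : X) (hx0 : x0 ∈ S p0)
    (hcrit : {u : X | ((0 : P), u) ∈
        contingentCone {px : P × X | px.2 ∈ S px.1} (p0, x0)} = {0}) :
    ∃ ℓ > (0 : ℝ), ∃ Q ∈ 𝓝 p0, ∃ U ∈ 𝓝 x0,
      ∀ p ∈ Q, ∀ x ∈ S p ∩ U, ‖x - x0‖ ≤ ℓ * ‖p - p0‖ := by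
  by_contra h
  push_neg at h
  have key : ∀ n : ℕ, ∃ p x, x ∈ S p ∧
      ‖p - p0‖ < 1 / (n + 1) ∧ ‖x - x0‖ < 1 / (n + 1) ∧
      ((n : ℝ) + 1) * ‖p - p0‖ < ‖x - x0‖ := by
    intro n
    have hpos : (0 : ℝ) < 1 / (n + 1) := by positivity
    obtain ⟨p, hp, x, ⟨hxS, hxU⟩, hlt⟩ :=
      h ((n : ℝ) + 1) (by positivity) (ball p0 (1 / (n + 1))) (ball_mem_nhds _ hpos)
        (ball x0 (1 / (n + 1))) (ball_mem_nhds _ hpos)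
    exact ⟨p, x, hxS, by simpa [dist_eq_norm] using hp,
      by simpa [dist_eq_norm] using hxU, hlt⟩
  choose p x hxS hp hx hlt using key
  set t : ℕ → ℝ := fun n => ‖x n - x0‖ with ht_def
  have ht : ∀ n, 0 < t n := fun n =>
    lt_of_le_of_lt (by positivity) (hlt n)
  set q : ℕ → P := fun n => (t n)⁻¹ • (p n - p0) with hq_def
  set w : ℕ → X := fun n => (t n)⁻¹ • (x n - x0) with hw_def
  have hw1 : ∀ n, w n ∈ sphere (0 : X) 1 := by
    intro n
    rw [mem_sphere_zero_iff_norm, hw_def]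
    rw [norm_smul, norm_inv, Real.norm_eq_abs, abs_of_pos (ht n)]
    exact inv_mul_cancel₀ (ht n).ne'
  obtain ⟨u, hu, φ, hφ, hconv⟩ :=
    (isCompact_sphere (0 : X) 1).tendsto_subseq hw1
  have hone : Tendsto (fun n : ℕ => 1 / ((n : ℝ) + 1)) atTop (𝓝 0) :=
    tendsto_one_div_add_atTop_nhds_zero_nat
  have htend : Tendsto t atTop (𝓝 0) :=
    squeeze_zero (fun n => (ht n).le) (fun n => (hx n).le) hone
  have hqnorm : ∀ n, ‖q n‖ ≤ 1 / ((n : ℝ) + 1) := by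
    intro n
    have hn : (0 : ℝ) < (n : ℝ) + 1 := by positivity
    rw [hq_def]
    rw [norm_smul, norm_inv, Real.norm_eq_abs, abs_of_pos (ht n)]
    rw [inv_mul_le_iff₀ (ht n), mul_one_div, le_div_iff₀ hn]
    nlinarith [hlt n]
  have hq0 : Tendsto q atTop (𝓝 0) := squeeze_zero_norm hqnorm hone
  have hmem : ((0 : P), u) ∈
      contingentCone {px : P × X | px.2 ∈ S px.1} (p0, x0) := by
    refine ⟨t ∘ φ, fun n => (q (φ n), w (φ n)), fun n => ht _,
      htend.comp hφ.tendsto_atTop, ?_, ?_⟩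
    · exact (Tendsto.prodMk_nhds (hq0.comp hφ.tendsto_atTop) hconv)
    · intro n
      have hc : t (φ n) ≠ 0 := (ht _).ne'
      show ((p0, x0) + t (φ n) • (q (φ n), w (φ n))).2 ∈
        S ((p0, x0) + t (φ n) • (q (φ n), w (φ n))).1
      simp only [Prod.smul_mk, Prod.mk_add_mk, hq_def, hw_def,
        smul_inv_smul₀ hc, Prod.fst, Prod.snd]
      simpa using hxS (φ n)
  have : u ∈ ({0} : Set X) := hcrit ▸ hmem
  have : u = 0 := this
  rw [mem_sphere_zero_iff_norm] at hu
  simp [this] at hu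
end
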